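/- For every integer k ≥ 0 there exist constants K_k > 0 and δ > 0 such that for every x with ‖x − x*‖ ≤ δ, J(x) is invertible, the inner chord iterates y₀ = x, y_{i+1} = y_i − J(x)⁻¹F(y_i) remain in the ball of radius δ around x* for i = 0, …, k, and ‖y_k − x*‖ ≤ K_k ‖x − x*‖^{k+1}. -/

import Mathlib

open scoped RealInnerProductSpace

/-- Inner (chord) iterates with frozen matrix `A`: `y₀ = x`, `y_{k+1} = y_k − A⁻¹ F(y_k)`.
If `A` is not invertible, `A.inverse = 0`. -/
noncomputable def chordIter {n : ℕ}
    (F : EuclideanSpace ℝ (Fin n) → EuclideanSpace ℝ (Fin n))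
    (A : EuclideanSpace ℝ (Fin n) →L[ℝ] EuclideanSpace ℝ (Fin n))
    (x : EuclideanSpace ℝ (Fin n)) : ℕ → EuclideanSpace ℝ (Fin n)
  | 0 => x
  | k + 1 => chordIter F A x k - A.inverse (F (chordIter F A x k))

/-- Shamanskii `m`-step map: `m` chord steps with the Jacobian frozen at `x`. -/
noncomputable def shamanskii {n : ℕ} (m : ℕ)
    (F : EuclideanSpace ℝ (Fin n) → EuclideanSpace ℝ (Fin n))
    (J : EuclideanSpace ℝ (Fin n) →
      (EuclideanSpace ℝ (Fin n) →L[ℝ] EuclideanSpace ℝ (Fin n)))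
    (x : EuclideanSpace ℝ (Fin n)) : EuclideanSpace ℝ (Fin n) :=
  chordIter F (J x) x m

/-! Positive definiteness makes `J x*` invertible, and the resolvent identity keeps
`‖J(x)⁻¹‖ ≤ 2 ‖J(x*)⁻¹‖` near `x*`. A chord step with `A = J x` satisfies
`y' - x* = -A⁻¹ (F y - F x* - A (y - x*))`, and by the mean value inequality for the
Lipschitz Jacobian this remainder is at most `γ (‖y - x*‖ + ‖x - x*‖) ‖y - x*‖`. So every step
multiplies the error by `O(‖x - x*‖)`, and `k` steps give `O(‖x - x*‖ ^ (k + 1))`. -/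

theorem ContinuousLinearMap.isUnit_of_inner_map_self_pos {E : Type*} [NormedAddCommGroup E]
    [InnerProductSpace ℝ E] [FiniteDimensional ℝ E] {T : E →L[ℝ] E}
    (hT : ∀ v, v ≠ 0 → 0 < ⟪v, T v⟫) : IsUnit T := by
  have hinj : Function.Injective T := by
    refine (injective_iff_map_eq_zero T).2 fun v hv => ?_
    by_contra hne
    simpa [hv] using hT v hne
  exact T.isUnit_iff_bijective.2 ⟨hinj, LinearMap.injective_iff_surjective.1 hinj⟩

theorem Ring.isUnit_and_norm_inverse_le_of_norm_sub_le {R : Type*} [NormedRing R]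
    [HasSummableGeomSeries R] {a b : R} {β : ℝ} (ha : IsUnit a)
    (hβ : ‖Ring.inverse a‖ ≤ β) (hba : ‖b - a‖ * β ≤ 1 / 2) :
    IsUnit b ∧ ‖Ring.inverse b‖ ≤ 2 * β := by
  have hsmall : ‖Ring.inverse a * (a - b)‖ < 1 :=
    calc ‖Ring.inverse a * (a - b)‖ ≤ ‖Ring.inverse a‖ * ‖b - a‖ := by
          rw [norm_sub_rev b a]; exact norm_mul_le _ _
      _ ≤ β * ‖b - a‖ := by gcongr
      _ < 1 := by linarith
  have hb : IsUnit b := by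
    have : a * (1 - Ring.inverse a * (a - b)) = b := by
      rw [mul_sub, mul_one, ← mul_assoc, Ring.mul_inverse_cancel a ha, one_mul, sub_sub_cancel]
    exact this ▸ ha.mul (isUnit_one_sub_of_norm_lt_one hsmall)
  refine ⟨hb, ?_⟩
  have hresolvent :
      Ring.inverse b = Ring.inverse a - Ring.inverse b * (b - a) * Ring.inverse a := by
    rw [mul_sub, sub_mul, Ring.inverse_mul_cancel b hb, one_mul, mul_assoc,
      Ring.mul_inverse_cancel a ha, mul_one, sub_sub_cancel]
  have : ‖Ring.inverse b‖ ≤ β + ‖Ring.inverse b‖ * (1 / 2) :=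
    calc ‖Ring.inverse b‖
        ≤ ‖Ring.inverse a‖ + ‖Ring.inverse b‖ * ‖b - a‖ * ‖Ring.inverse a‖ := by
          conv_lhs => rw [hresolvent]
          exact (norm_sub_le _ _).trans (by gcongr; exact norm_mul₃_le)
      _ ≤ β + ‖Ring.inverse b‖ * (‖b - a‖ * β) := by
          rw [mul_assoc]; gcongr
      _ ≤ β + ‖Ring.inverse b‖ * (1 / 2) := by gcongr
  linarith

theorem norm_image_sub_sub_apply_le_of_fderiv_lipschitz {E G : Type*} [NormedAddCommGroup E]
    [NormedSpace ℝ E] [NormedAddCommGroup G] [NormedSpace ℝ G] {f : E → G}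
    {f' : E → E →L[ℝ] G} {L : ℝ} (hL : 0 ≤ L) (hf : ∀ x, HasFDerivAt f (f' x) x)
    (hLip : ∀ x y, ‖f' x - f' y‖ ≤ L * ‖x - y‖) (x y z : E) :
    ‖f y - f z - f' x (y - z)‖ ≤ L * (‖y - z‖ + ‖x - z‖) * ‖y - z‖ := by
  refine Convex.norm_image_sub_le_of_norm_hasFDerivWithin_le' (s := Metric.closedBall z ‖y - z‖)
    (fun w _ => (hf w).hasFDerivWithinAt) (fun w hw => ?_) (convex_closedBall _ _)
    (Metric.mem_closedBall_self (norm_nonneg _)) (by simp [dist_eq_norm])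
  rw [Metric.mem_closedBall, dist_eq_norm] at hw
  calc ‖f' w - f' x‖ ≤ L * ‖w - x‖ := hLip w x
    _ ≤ L * (‖y - z‖ + ‖x - z‖) := by
        gcongr
        exact (norm_sub_le_norm_sub_add_norm_sub w z x).trans (by rw [norm_sub_rev z x]; gcongr)

theorem le_and_le_pow_mul_of_succ_le {e : ℕ → ℝ} {c r : ℝ} (hc : 0 ≤ c) (he : ∀ i, 0 ≤ e i)
    (he0 : e 0 ≤ r) (hcr : 2 * c * r ≤ 1) (hsucc : ∀ i, e (i + 1) ≤ c * (e i + r) * e i) :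
    ∀ i, e i ≤ r ∧ e i ≤ (2 * c) ^ i * r ^ (i + 1) := by
  intro i
  induction i with
  | zero => simpa using he0
  | succ i ih =>
    have hr : 0 ≤ r := (he 0).trans he0
    have hcontr : e (i + 1) ≤ 2 * c * r * e i :=
      calc e (i + 1) ≤ c * (e i + r) * e i := hsucc i
        _ ≤ c * (r + r) * e i := by gcongr; exacts [he i, ih.1]
        _ = 2 * c * r * e i := by ring
    constructor
    · nlinarith [he i, ih.1]
    · calc e (i + 1) ≤ 2 * c * r * e i := hcontr
        _ ≤ 2 * c * r * ((2 * c) ^ i * r ^ (i + 1)) := by gcongr; exact ih.2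
        _ = (2 * c) ^ (i + 1) * r ^ (i + 1 + 1) := by ring

theorem ContinuousLinearMap.sub_inverse_apply_sub_eq {𝕜 E : Type*} [NontriviallyNormedField 𝕜]
    [NormedAddCommGroup E] [NormedSpace 𝕜 E] {A : E →L[𝕜] E} (hA : IsUnit A) {F : E → E}
    {xs : E} (hroot : F xs = 0) (y : E) :
    y - A.inverse (F y) - xs = -Ring.inverse A (F y - F xs - A (y - xs)) := by
  have hAA : Ring.inverse A (A (y - xs)) = y - xs := by
    simpa using congr($(Ring.inverse_mul_cancel A hA) (y - xs))
  rw [← ContinuousLinearMap.ringInverse_eq_inverse, map_sub, map_sub, hroot, map_zero, hAA]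
  abel

theorem norm_chordIter_sub_le {n : ℕ} {F : EuclideanSpace ℝ (Fin n) → EuclideanSpace ℝ (Fin n)}
    {A : EuclideanSpace ℝ (Fin n) →L[ℝ] EuclideanSpace ℝ (Fin n)} {x xs : EuclideanSpace ℝ (Fin n)}
    {M L : ℝ} (hA : IsUnit A) (hM : ‖Ring.inverse A‖ ≤ M) (hroot : F xs = 0) (hL : 0 ≤ L)
    (hrem : ∀ y, ‖F y - F xs - A (y - xs)‖ ≤ L * (‖y - xs‖ + ‖x - xs‖) * ‖y - xs‖)
    (hsmall : 2 * (M * L) * ‖x - xs‖ ≤ 1) (i : ℕ) :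
    ‖chordIter F A x i - xs‖ ≤ ‖x - xs‖ ∧
      ‖chordIter F A x i - xs‖ ≤ (2 * (M * L)) ^ i * ‖x - xs‖ ^ (i + 1) := by
  refine le_and_le_pow_mul_of_succ_le (e := fun j => ‖chordIter F A x j - xs‖)
    (mul_nonneg ((norm_nonneg _).trans hM) hL) (fun _ => norm_nonneg _) le_rfl hsmall
    (fun j => ?_) i
  set y := chordIter F A x j
  calc ‖chordIter F A x (j + 1) - xs‖
      = ‖Ring.inverse A (F y - F xs - A (y - xs))‖ := by
        rw [chordIter, A.sub_inverse_apply_sub_eq hA hroot, norm_neg]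
    _ ≤ M * (L * (‖y - xs‖ + ‖x - xs‖) * ‖y - xs‖) :=
        (ContinuousLinearMap.le_opNorm _ _).trans (mul_le_mul hM (hrem y) (norm_nonneg _)
          ((norm_nonneg _).trans hM))
    _ = M * L * (‖y - xs‖ + ‖x - xs‖) * ‖y - xs‖ := by ring

theorem chord_inner_iterates_estimate (n : ℕ)
    (F : EuclideanSpace ℝ (Fin n) → EuclideanSpace ℝ (Fin n))
    (J : EuclideanSpace ℝ (Fin n) →
      (EuclideanSpace ℝ (Fin n) →L[ℝ] EuclideanSpace ℝ (Fin n)))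
    (hJ : ∀ x, HasFDerivAt F (J x) x)
    (xs : EuclideanSpace ℝ (Fin n)) (hroot : F xs = 0)
    (γ : ℝ) (hγ : 0 < γ)
    (hLip : ∀ x y, ‖J x - J y‖ ≤ γ * ‖x - y‖)
    (hpos : ∀ v : EuclideanSpace ℝ (Fin n), v ≠ 0 → 0 < ⟪v, (J xs) v⟫) :
    ∀ k : ℕ, ∃ K > (0 : ℝ), ∃ δ > (0 : ℝ),
      ∀ x : EuclideanSpace ℝ (Fin n), ‖x - xs‖ ≤ δ →
        IsUnit (J x) ∧
        (∀ i ≤ k, ‖chordIter F (J x) x i - xs‖ ≤ δ) ∧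
        ‖chordIter F (J x) x k - xs‖ ≤ K * ‖x - xs‖ ^ (k + 1) := by
  intro k
  -- `+ 1` keeps `β` positive in dimension zero, where every norm vanishes.
  set β := ‖Ring.inverse (J xs)‖ + 1
  refine ⟨(2 * (2 * β * γ)) ^ k, by positivity, 1 / (4 * β * γ), by positivity, fun x hx => ?_⟩
  have hβγr : 4 * β * γ * ‖x - xs‖ ≤ 1 := by
    rwa [le_div_iff₀' (by positivity)] at hx
  have hJx_near : ‖J x - J xs‖ * β ≤ 1 / 2 :=
    calc ‖J x - J xs‖ * β ≤ γ * ‖x - xs‖ * β := by gcongr; exact hLip x xs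
      _ ≤ 1 / 2 := by linarith
  obtain ⟨hunit, hinv⟩ := Ring.isUnit_and_norm_inverse_le_of_norm_sub_le
    (ContinuousLinearMap.isUnit_of_inner_map_self_pos hpos) (le_add_of_nonneg_right zero_le_one)
    hJx_near
  have hiter := norm_chordIter_sub_le hunit hinv hroot hγ.le
    (fun y => norm_image_sub_sub_apply_le_of_fderiv_lipschitz hγ.le hJ hLip x y xs)
    (by linarith)
  exact ⟨hunit, fun i _ => (hiter i).1.trans hx, (hiter k).2⟩
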